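/- Let π be a pmf on a finite product set 𝒳 × 𝒴 with π(x,y) > 0 for all (x,y), with marginals π_X and π_Y. Let P_X be a pmf on 𝒳 with P_X(x) > 0 for all x and P_Y a pmf on 𝒴 with P_Y(y) > 0 for all y. Then 𝓗(P_X, P_Y ‖ π) ≥ Σ_{(x,y)} P_X(x) P_Y(y) log(1/π(x,y)), and equality holds if and only if π(x,y) = π_X(x)·π_Y(y) for all (x,y). -/

import Mathlib

open scoped BigOperators

/-- `log(1/t)` with values in the extended reals: `+∞` when `t = 0`. -/
noncomputable def negLogE (t : ℝ) : EReal :=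
  if t = 0 then (⊤ : EReal) else ((Real.log t⁻¹ : ℝ) : EReal)

/-- `Q` is a coupling of the pmfs `PX` and `PY`. -/
def IsCoupling {X Y : Type*} [Fintype X] [Fintype Y]
    (PX : X → ℝ) (PY : Y → ℝ) (Q : X × Y → ℝ) : Prop :=
  (∀ p, 0 ≤ Q p) ∧ (∀ x, ∑ y, Q (x, y) = PX x) ∧ (∀ y, ∑ x, Q (x, y) = PY y)

/-- The maximal cross-entropy `𝓗(PX, PY ‖ π)`, with values in the extended reals. -/
noncomputable def maxCrossEnt {X Y : Type*} [Fintype X] [Fintype Y]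
    (PX : X → ℝ) (PY : Y → ℝ) (π : X × Y → ℝ) : EReal :=
  sSup {s : EReal | ∃ Q, IsCoupling PX PY Q ∧
    s = ∑ p : X × Y, (Q p : EReal) * negLogE (π p)}

/-- Shannon entropy `H(P) = ∑ P(x) log(1/P(x))` (with `0 · log (1/0) = 0`). -/
noncomputable def entropy {X : Type*} [Fintype X] (P : X → ℝ) : ℝ :=
  ∑ x, P x * Real.log (P x)⁻¹

/-!
The product coupling `PX ⊗ PY` is feasible, which gives the lower bound. If `π = π_X ⊗ π_Y`,
then `log (1/π)` splits as `a x + b y`, and every coupling gives it the same value. Otherwise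
some `2 × 2` cross product of `π` fails to balance, so `log (1/π)` has a nonzero difference
around that rectangle; moving a little mass of the full-support coupling `PX ⊗ PY` around the
rectangle keeps the marginals and strictly increases the cross-entropy.
-/

open Finset

theorem EReal.coe_finset_sum {α : Type*} (s : Finset α) (f : α → ℝ) :
    ((∑ a ∈ s, f a : ℝ) : EReal) = ∑ a ∈ s, (f a : EReal) :=
  map_sum (⟨⟨(↑), EReal.coe_zero⟩, EReal.coe_add⟩ : ℝ →+ EReal) f s

section

variable {X Y : Type*} [Fintype X] [Fintype Y]

theorem sum_coe_mul_negLogE {π : X × Y → ℝ} (hπ : ∀ p, π p ≠ 0) (Q : X × Y → ℝ) :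
    ∑ p, (Q p : EReal) * negLogE (π p) = ((∑ p, Q p * Real.log (π p)⁻¹ : ℝ) : EReal) := by
  rw [EReal.coe_finset_sum]
  refine sum_congr rfl fun p _ => ?_
  rw [negLogE, if_neg (hπ p), EReal.coe_mul]

theorem le_maxCrossEnt {π : X × Y → ℝ} (hπ : ∀ p, π p ≠ 0) {PX : X → ℝ} {PY : Y → ℝ}
    {Q : X × Y → ℝ} (hQ : IsCoupling PX PY Q) :
    ((∑ p, Q p * Real.log (π p)⁻¹ : ℝ) : EReal) ≤ maxCrossEnt PX PY π :=
  le_sSup ⟨Q, hQ, (sum_coe_mul_negLogE hπ Q).symm⟩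

theorem maxCrossEnt_le {π : X × Y → ℝ} (hπ : ∀ p, π p ≠ 0) {PX : X → ℝ} {PY : Y → ℝ}
    {c : ℝ} (h : ∀ Q, IsCoupling PX PY Q → ∑ p, Q p * Real.log (π p)⁻¹ ≤ c) :
    maxCrossEnt PX PY π ≤ c := by
  refine sSup_le ?_
  rintro s ⟨Q, hQ, rfl⟩
  rw [sum_coe_mul_negLogE hπ, EReal.coe_le_coe_iff]
  exact h Q hQ

theorem isCoupling_mul {PX : X → ℝ} {PY : Y → ℝ} (hPX : ∀ x, 0 ≤ PX x) (hPX1 : ∑ x, PX x = 1)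
    (hPY : ∀ y, 0 ≤ PY y) (hPY1 : ∑ y, PY y = 1) :
    IsCoupling PX PY fun p => PX p.1 * PY p.2 :=
  ⟨fun p => mul_nonneg (hPX _) (hPY _), fun x => by dsimp only; rw [← mul_sum, hPY1, mul_one],
    fun y => by dsimp only; rw [← sum_mul, hPX1, one_mul]⟩

theorem IsCoupling.sum_mul_add {PX : X → ℝ} {PY : Y → ℝ} {Q : X × Y → ℝ}
    (hQ : IsCoupling PX PY Q) (f : X → ℝ) (g : Y → ℝ) :
    ∑ p, Q p * (f p.1 + g p.2) = ∑ x, PX x * f x + ∑ y, PY y * g y := by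
  simp only [mul_add, sum_add_distrib, Fintype.sum_prod_type]
  congr 1
  · exact sum_congr rfl fun x _ => by rw [← sum_mul, hQ.2.1 x]
  · rw [sum_comm]
    exact sum_congr rfl fun y _ => by rw [← sum_mul, hQ.2.2 y]

theorem eq_marginal_mul_of_cross_mul_eq {π : X × Y → ℝ} (hπ1 : ∑ p, π p = 1)
    (h : ∀ x x' y y', π (x, y) * π (x', y') = π (x, y') * π (x', y)) (p : X × Y) :
    π p = (∑ y, π (p.1, y)) * (∑ x, π (x, p.2)) := by
  obtain ⟨x, y⟩ := p
  calc π (x, y) = ∑ p, π (x, y) * π p := by rw [← mul_sum, hπ1, mul_one]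
    _ = ∑ x', ∑ y', π (x, y') * π (x', y) := by
        rw [Fintype.sum_prod_type]
        exact sum_congr rfl fun x' _ => sum_congr rfl fun y' _ => h x x' y y'
    _ = (∑ y', π (x, y')) * (∑ x', π (x', y)) := by rw [sum_mul_sum, sum_comm]

end

section RectPert

variable {X Y : Type*} [DecidableEq X] [DecidableEq Y]

def rectPert (x x' : X) (y y' : Y) (p : X × Y) : ℝ :=
  (if p = (x, y') then 1 else 0) + (if p = (x', y) then 1 else 0)
    - (if p = (x, y) then 1 else 0) - (if p = (x', y') then 1 else 0)

theorem neg_one_le_rectPert {x x' : X} {y y' : Y} (hx : x ≠ x') (hy : y ≠ y') (p : X × Y) :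
    -1 ≤ rectPert x x' y y' p := by
  unfold rectPert
  split_ifs <;> simp_all [Prod.ext_iff]

theorem sum_rectPert_left [Fintype Y] {x x' : X} (hx : x ≠ x') (y y' : Y) (x₀ : X) :
    ∑ y₀, rectPert x x' y y' (x₀, y₀) = 0 := by
  unfold rectPert
  by_cases h₁ : x₀ = x <;> by_cases h₂ : x₀ = x' <;>
    simp [sum_sub_distrib, h₁, h₂, hx, hx.symm]

theorem sum_rectPert_right [Fintype X] (x x' : X) {y y' : Y} (hy : y ≠ y') (y₀ : Y) :
    ∑ x₀, rectPert x x' y y' (x₀, y₀) = 0 := by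
  unfold rectPert
  by_cases h₁ : y₀ = y <;> by_cases h₂ : y₀ = y' <;>
    simp [sum_sub_distrib, h₁, h₂, hy, hy.symm]

theorem sum_rectPert_mul [Fintype X] [Fintype Y] (x x' : X) (y y' : Y) (f : X × Y → ℝ) :
    ∑ p, rectPert x x' y y' p * f p = f (x, y') + f (x', y) - f (x, y) - f (x', y') := by
  simp [rectPert, add_mul, sub_mul, sum_add_distrib, sum_sub_distrib]

end RectPert

theorem IsCoupling.exists_sum_mul_lt_of_pos {X Y : Type*} [Fintype X] [Fintype Y]
    {PX : X → ℝ} {PY : Y → ℝ} {Q : X × Y → ℝ} (hQ : IsCoupling PX PY Q) (hQpos : ∀ p, 0 < Q p)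
    {f : X × Y → ℝ} {x x' : X} {y y' : Y}
    (hf : 0 < f (x, y') + f (x', y) - f (x, y) - f (x', y')) :
    ∃ Q', IsCoupling PX PY Q' ∧ ∑ p, Q p * f p < ∑ p, Q' p * f p := by
  classical
  have hx : x ≠ x' := by rintro rfl; linarith
  have hy : y ≠ y' := by rintro rfl; linarith
  have : Nonempty (X × Y) := ⟨(x, y)⟩
  obtain ⟨p₀, hp₀⟩ := Finite.exists_min Q
  refine ⟨fun p => Q p + Q p₀ * rectPert x x' y y' p,
    ⟨fun p => ?_, fun x₀ => ?_, fun y₀ => ?_⟩, ?_⟩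
  · nlinarith [hp₀ p, hQpos p₀, neg_one_le_rectPert hx hy p]
  · rw [sum_add_distrib, ← mul_sum, sum_rectPert_left hx, mul_zero, add_zero, hQ.2.1]
  · rw [sum_add_distrib, ← mul_sum, sum_rectPert_right _ _ hy, mul_zero, add_zero, hQ.2.2]
  · simp only [add_mul, mul_assoc, sum_add_distrib, ← mul_sum, sum_rectPert_mul]
    nlinarith [hQpos p₀]

theorem IsCoupling.exists_sum_mul_lt {X Y : Type*} [Fintype X] [Fintype Y]
    {PX : X → ℝ} {PY : Y → ℝ} {Q : X × Y → ℝ} (hQ : IsCoupling PX PY Q) (hQpos : ∀ p, 0 < Q p)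
    {f : X × Y → ℝ} {x x' : X} {y y' : Y}
    (hf : f (x, y') + f (x', y) - f (x, y) - f (x', y') ≠ 0) :
    ∃ Q', IsCoupling PX PY Q' ∧ ∑ p, Q p * f p < ∑ p, Q' p * f p := by
  rcases hf.lt_or_gt with hneg | hpos
  · exact hQ.exists_sum_mul_lt_of_pos hQpos (x := x') (x' := x) (y := y) (y' := y') (by linarith)
  · exact hQ.exists_sum_mul_lt_of_pos hQpos hpos

theorem log_inv_cross_ne {X Y : Type*} {π : X × Y → ℝ} (hπ : ∀ p, 0 < π p) {x x' : X} {y y' : Y}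
    (h : π (x, y) * π (x', y') ≠ π (x, y') * π (x', y)) :
    Real.log (π (x, y'))⁻¹ + Real.log (π (x', y))⁻¹ - Real.log (π (x, y))⁻¹
      - Real.log (π (x', y'))⁻¹ ≠ 0 := by
  refine fun h0 => h (Real.log_injOn_pos (mul_pos (hπ _) (hπ _)) (mul_pos (hπ _) (hπ _)) ?_)
  simp only [Real.log_inv] at h0
  rw [Real.log_mul (hπ _).ne' (hπ _).ne', Real.log_mul (hπ _).ne' (hπ _).ne']
  linarith

theorem IsCoupling.sum_mul_log_inv_of_eq_mul {X Y : Type*} [Fintype X] [Fintype Y]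
    {PX : X → ℝ} {PY : Y → ℝ} {Q : X × Y → ℝ} (hQ : IsCoupling PX PY Q) {π : X × Y → ℝ}
    (hπ : ∀ p, π p ≠ 0) {a : X → ℝ} {b : Y → ℝ} (h : ∀ p, π p = a p.1 * b p.2) :
    ∑ p, Q p * Real.log (π p)⁻¹ = ∑ x, PX x * Real.log (a x)⁻¹ + ∑ y, PY y * Real.log (b y)⁻¹ := by
  rw [← hQ.sum_mul_add]
  refine sum_congr rfl fun p _ => ?_
  have hab : a p.1 * b p.2 ≠ 0 := h p ▸ hπ p
  rw [h p, mul_inv, Real.log_mul (inv_ne_zero (left_ne_zero_of_mul hab))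
    (inv_ne_zero (right_ne_zero_of_mul hab))]

/-- for a full-support pmf `π` and full-support pmfs `P_X, P_Y`,
`𝓗(P_X, P_Y ‖ π) ≥ ∑ P_X(x) P_Y(y) log(1/π(x,y))`, with equality iff `π` is the
product of its marginals. -/
theorem stmt_2 {X Y : Type*} [Fintype X] [Fintype Y]
    (π : X × Y → ℝ) (hπpos : ∀ p, 0 < π p) (hπ1 : ∑ p, π p = 1)
    (PX : X → ℝ) (hPXpos : ∀ x, 0 < PX x) (hPX1 : ∑ x, PX x = 1)
    (PY : Y → ℝ) (hPYpos : ∀ y, 0 < PY y) (hPY1 : ∑ y, PY y = 1) :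
    ((∑ p : X × Y, PX p.1 * PY p.2 * Real.log (π p)⁻¹ : ℝ) : EReal)
      ≤ maxCrossEnt PX PY π ∧
    (maxCrossEnt PX PY π
        = ((∑ p : X × Y, PX p.1 * PY p.2 * Real.log (π p)⁻¹ : ℝ) : EReal) ↔
      ∀ p : X × Y, π p = (∑ y, π (p.1, y)) * (∑ x, π (x, p.2))) := by
  have hπ : ∀ p, π p ≠ 0 := fun p => (hπpos p).ne'
  have hprod := isCoupling_mul (fun x => (hPXpos x).le) hPX1 (fun y => (hPYpos y).le) hPY1
  have hle := le_maxCrossEnt hπ hprod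
  refine ⟨hle, fun heq => eq_marginal_mul_of_cross_mul_eq hπ1 fun x x' y y' => ?_, fun h => ?_⟩
  · by_contra hne
    obtain ⟨Q, hQ, hlt⟩ := hprod.exists_sum_mul_lt (fun p => mul_pos (hPXpos _) (hPYpos _))
      (f := fun p => Real.log (π p)⁻¹) (log_inv_cross_ne hπpos hne)
    exact (EReal.coe_le_coe_iff.1 ((le_maxCrossEnt hπ hQ).trans heq.le)).not_gt hlt
  · refine le_antisymm (maxCrossEnt_le hπ fun Q hQ => ?_) hle
    exact ((hQ.sum_mul_log_inv_of_eq_mul hπ h).trans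
      (hprod.sum_mul_log_inv_of_eq_mul hπ (a := fun x => ∑ y, π (x, y))
        (b := fun y => ∑ x, π (x, y)) h).symm).le
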